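/- Let A be an m×n integer matrix of full rank m that is unimodular (every m×m submatrix has determinant 0, 1, or −1), and let y ∈ ℤ^m. Then every vertex of the polytope P = {x ∈ ℝ^n : A x = y, x ≥ 0} has integer coordinates; i.e., P is an integral polytope. -/

import Mathlib

/-!
Let `x` be a vertex. A nonzero kernel vector `d` of `A` supported on `supp x` would put `x` in the
middle of the segment `[x - εd, x + εd]` inside the polytope, so the columns of `A` on `supp x`
are independent. Since `A` has rank `m`, they extend to `m` independent columns `g`; the square
submatrix `M = A[:, g]` then has nonzero determinant, hence determinant `±1` by unimodularity, so
`M⁻¹` is an integer matrix. As `x` vanishes off `g`, `M (x ∘ g) = y`, and `x ∘ g = M⁻¹ y ∈ ℤ^m`.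
-/

open Matrix Set Function Filter Topology

theorem exists_pos_forall_abs_mul_le {κ : Type*} [Finite κ] {x d : κ → ℝ} (hx : ∀ j, 0 ≤ x j)
    (hd : support d ⊆ support x) : ∃ ε > 0, ∀ j, |ε * d j| ≤ x j := by
  have hnear : ∀ j, ∀ᶠ ε in 𝓝 (0 : ℝ), |ε * d j| ≤ x j := fun j ↦ by
    rcases (hx j).eq_or_lt with hxj | hxj
    · have hdj : d j = 0 := by_contra fun h ↦ hd h hxj.symm
      exact .of_forall fun ε ↦ by simp [hdj, ← hxj]
    · have hlim : Tendsto (fun ε : ℝ ↦ |ε * d j|) (𝓝 0) (𝓝 0) := by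
        simpa using ((continuous_id.mul continuous_const).abs.tendsto (0 : ℝ))
      exact hlim.eventually (eventually_le_nhds hxj)
  have hpos : ∀ᶠ ε in 𝓝[>] (0 : ℝ), 0 < ε := eventually_mem_nhdsWithin
  exact (hpos.and ((eventually_all.2 hnear).filter_mono nhdsWithin_le_nhds)).exists

theorem eq_zero_of_mulVec_eq_zero_of_mem_extremePoints {ι κ : Type*} [Fintype κ]
    {A : Matrix ι κ ℝ} {b : ι → ℝ} {x : κ → ℝ}
    (hx : x ∈ extremePoints ℝ {x | A *ᵥ x = b ∧ ∀ j, 0 ≤ x j}) {d : κ → ℝ} (hAd : A *ᵥ d = 0)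
    (hd : support d ⊆ support x) : d = 0 := by
  obtain ⟨⟨hAx, hx₀⟩, hext⟩ := hx
  obtain ⟨ε, hε, hεd⟩ := exists_pos_forall_abs_mul_le hx₀ hd
  have hmem : ∀ s, |s| = ε → x + s • d ∈ {x | A *ᵥ x = b ∧ ∀ j, 0 ≤ x j} := fun s hs ↦
    ⟨by rw [mulVec_add, mulVec_smul, hAx, hAd, smul_zero, add_zero], fun j ↦ by
      have h : |s * d j| ≤ x j := by rw [abs_mul, hs, ← abs_of_pos hε, ← abs_mul]; exact hεd j
      simp only [Pi.add_apply, Pi.smul_apply, smul_eq_mul]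
      linarith [neg_abs_le (s * d j)]⟩
  have hseg : x ∈ openSegment ℝ (x + ε • d) (x + (-ε) • d) :=
    ⟨1 / 2, 1 / 2, by norm_num, by norm_num, by norm_num, by
      ext j; simp only [Pi.add_apply, Pi.smul_apply, smul_eq_mul]; ring⟩
  have := hext (hmem ε (abs_of_pos hε)) (hmem (-ε) (by simp [abs_of_pos hε])) hseg
  simpa [hε.ne'] using this

theorem linearIndepOn_col_support_of_mem_extremePoints {ι κ : Type*} [Fintype κ]
    {A : Matrix ι κ ℝ} {b : ι → ℝ} {x : κ → ℝ}
    (hx : x ∈ extremePoints ℝ {x | A *ᵥ x = b ∧ ∀ j, 0 ≤ x j}) :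
    LinearIndepOn ℝ A.col (support x) := by
  refine linearIndepOn_iff.2 fun l hl hAl ↦ DFunLike.coe_injective ?_
  refine eq_zero_of_mulVec_eq_zero_of_mem_extremePoints hx ?_
    ((Finsupp.fun_support_eq l).trans_subset ((Finsupp.mem_supported _ _).1 hl))
  ext i
  simpa [Finsupp.linearCombination_apply, Finsupp.sum_fintype, mulVec, dotProduct, mul_comm]
    using congrFun hAl i

theorem Matrix.exists_isUnit_submatrix_of_linearIndepOn_col {ι κ K : Type*} [Fintype ι]
    [DecidableEq ι] [Fintype κ] [Field K] {A : Matrix ι κ K} (hA : A.rank = Fintype.card ι)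
    {s : Set κ} (hs : LinearIndepOn K A.col s) :
    ∃ g : ι → κ, Injective g ∧ s ⊆ range g ∧ IsUnit (A.submatrix id g) := by
  classical
  obtain ⟨t, -, hst, hspan, ht⟩ := exists_linearIndepOn_extension hs (subset_univ s)
  have hspan_eq : Submodule.span K (A.col '' t) = Submodule.span K (range A.col) :=
    le_antisymm (Submodule.span_mono (image_subset_range _ _))
      (Submodule.span_le.2 (by rwa [← image_univ]))
  have hcard : Nat.card t = Nat.card ι := by
    rw [Nat.card_eq_fintype_card, Nat.card_eq_fintype_card, ← hA, rank_eq_finrank_span_cols,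
      ← hspan_eq, image_eq_range, linearIndependent_iff_card_eq_finrank_span.1 ht, Set.finrank]
  obtain ⟨e⟩ := Finite.card_eq.1 hcard.symm
  refine ⟨(↑) ∘ e, Subtype.val_injective.comp e.injective,
    fun j hj ↦ ⟨e.symm ⟨j, hst hj⟩, by simp⟩, ?_⟩
  rw [← linearIndependent_cols_iff_isUnit]
  exact ht.comp e e.injective

theorem Matrix.submatrix_id_mulVec_comp {ι ι' κ R : Type*} [Fintype ι'] [Fintype κ]
    [NonUnitalNonAssocSemiring R] (A : Matrix ι κ R) {g : ι' → κ} (hg : Injective g)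
    {x : κ → R} (hx : support x ⊆ range g) : A.submatrix id g *ᵥ (x ∘ g) = A *ᵥ x := by
  classical
  ext i
  change ∑ k, A i (g k) * x (g k) = ∑ j, A i j * x j
  rw [← Finset.sum_image (f := fun j ↦ A i j * x j) hg.injOn]
  refine Finset.sum_subset (Finset.subset_univ _) fun j _ hj ↦ ?_
  have : x j = 0 := not_not.1 fun h ↦ hj (by simpa using hx h)
  rw [this, mul_zero]

theorem Matrix.map_comp_mulVec_eq {ι R S : Type*} [Fintype ι] [DecidableEq ι] [CommRing R]
    [CommRing S] (f : R →+* S) {M : Matrix ι ι R} (hM : IsUnit M.det) {z : ι → S} {y : ι → R}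
    (h : M.map f *ᵥ z = f ∘ y) : z = f ∘ (M⁻¹ *ᵥ y) := by
  have hinv : M⁻¹.map f * M.map f = 1 := by
    rw [← RingHom.mapMatrix_apply, ← RingHom.mapMatrix_apply, ← map_mul, nonsing_inv_mul _ hM,
      map_one]
  ext i
  rw [Function.comp_apply, RingHom.map_mulVec, ← h, mulVec_mulVec, hinv, one_mulVec]

theorem integral_polytope_of_unimodular
    {m n : ℕ} (A : Matrix (Fin m) (Fin n) ℤ) (y : Fin m → ℤ)
    (hrank : (A.map (Int.cast : ℤ → ℝ)).rank = m)
    (hunimod : ∀ g : Fin m → Fin n, Function.Injective g →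
      (A.submatrix id g).det = 0 ∨ (A.submatrix id g).det = 1 ∨ (A.submatrix id g).det = -1)
    (x : Fin n → ℝ)
    (hx : x ∈ Set.extremePoints ℝ
      {x : Fin n → ℝ | (A.map (Int.cast : ℤ → ℝ)).mulVec x = (fun i => (y i : ℝ)) ∧ ∀ j, 0 ≤ x j}) :
    ∀ j, ∃ k : ℤ, x j = (k : ℝ) := by
  obtain ⟨g, hg, hsupp, hunit⟩ :=
    (A.map (Int.cast : ℤ → ℝ)).exists_isUnit_submatrix_of_linearIndepOn_col
      (by rw [hrank, Fintype.card_fin]) (linearIndepOn_col_support_of_mem_extremePoints hx)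
  set M := A.submatrix id g
  have hdet_ne : M.det ≠ 0 := fun h0 ↦ by
    have := (isUnit_iff_isUnit_det _).1 hunit
    rw [show (A.map Int.cast).submatrix id g = (Int.castRingHom ℝ).mapMatrix M from rfl,
      ← RingHom.map_det, h0, map_zero] at this
    exact not_isUnit_zero this
  have hdet : IsUnit M.det := Int.isUnit_iff.2 ((hunimod g hg).resolve_left hdet_ne)
  have hxg : x ∘ g = Int.cast ∘ (M⁻¹ *ᵥ y) :=
    map_comp_mulVec_eq (Int.castRingHom ℝ) hdet
      ((A.map Int.cast).submatrix_id_mulVec_comp hg hsupp |>.trans hx.1.1)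
  intro j
  by_cases hj : j ∈ range g
  · obtain ⟨k, rfl⟩ := hj
    exact ⟨_, congrFun hxg k⟩
  · exact ⟨0, by simpa using not_not.1 fun h ↦ hj (hsupp h)⟩
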